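/- arXiv:1801.08437 — 4 statements merged into one kernel-verified Lean document; each statement's English description precedes it below -/
import Mathlib

section
/- Let K be a field, A an n×n matrix over K with characteristic polynomial factorization χ_A = f_1^{m_1}···f_q^{m_q} into pairwise distinct monic irreducible factors, and let g_p = χ_A / f_p^{m_p}. Fix j ∈ {1,…,n} and p ∈ {1,…,q}, and let r_{j,p} be the multiplicity of f_p in the minimal annihilating polynomial π_{A,e_j} of the unit vector e_j. Then f_p(A)^{m_p} g_p(A) e_j = 0, and r_{j,p} is the minimum natural number k such that f_p(A)^k g_p(A) e_j = 0. -/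
/-!
Write `π = f^r π'` with `f ∤ π'`. By Cayley–Hamilton `π ∣ χ_A = f^m g`, and `π'` is coprime
to `f^m`, so `π' ∣ g`. Since `f ∤ g` (the `f_i` are distinct monic irreducibles), the
divisibility `π ∣ f^k g`, i.e. `f(A)^k g(A) e_j = 0`, holds exactly when `f^r ∣ f^k`,
that is, when `r ≤ k`.
-/

open Polynomial Matrix Finset

theorem Prime.pow_dvd_pow_mul_iff_le {M : Type*} [CommMonoidWithZero M] [IsCancelMulZero M] {f g : M}
    (hf : Prime f) (hfg : ¬f ∣ g) {r k : ℕ} : f ^ r ∣ f ^ k * g ↔ r ≤ k :=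
  ⟨fun h => (pow_dvd_pow_iff hf.ne_zero hf.not_isUnit).1 (hf.pow_dvd_of_dvd_mul_right r hfg h),
    fun h => (pow_dvd_pow f h).mul_right g⟩

theorem Prime.dvd_pow_mul_iff_le_of_pow_dvd_of_not_pow_succ_dvd {R : Type*} [CommRing R]
    [IsDomain R] [IsBezout R] {f g π : R} {m r : ℕ} (hf : Prime f) (hfg : ¬f ∣ g)
    (hπ : π ∣ f ^ m * g) (hr : f ^ r ∣ π) (hr' : ¬f ^ (r + 1) ∣ π) (k : ℕ) :
    π ∣ f ^ k * g ↔ r ≤ k := by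
  obtain ⟨π', rfl⟩ := hr
  have hfπ' : ¬f ∣ π' := fun h => hr' (pow_succ f r ▸ mul_dvd_mul_left _ h)
  have hπ'g : π' ∣ g := (hf.irreducible.coprime_pow_of_not_dvd m hfπ').dvd_of_dvd_mul_left
    ((dvd_mul_left π' _).trans hπ)
  exact ⟨fun h => (hf.pow_dvd_pow_mul_iff_le hfg).1 ((dvd_mul_right _ _).trans h),
    fun h => mul_dvd_mul (pow_dvd_pow f h) hπ'g⟩

theorem Polynomial.not_dvd_prod_of_monic_irreducible {K ι : Type*} [Field K] {f : ι → K[X]}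
    (hmonic : ∀ i, (f i).Monic) (hirr : ∀ i, Irreducible (f i)) (hinj : Function.Injective f)
    {s : Finset ι} {p : ι} (hp : p ∉ s) (m : ι → ℕ) : ¬f p ∣ ∏ i ∈ s, f i ^ m i := by
  refine (hirr p).prime.not_dvd_finsetProd fun i hi hdvd => ?_
  have hassoc : Associated (f p) (f i) :=
    (hirr p).associated_of_dvd (hirr i) ((hirr p).prime.dvd_of_dvd_pow hdvd)
  rw [hinj (eq_of_monic_of_associated (hmonic p) (hmonic i) hassoc)] at hp
  exact hp hi

theorem multiplicity_is_least_annihilating_power_general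
    (K : Type*) [Field K] (n q : ℕ)
    (A : Matrix (Fin n) (Fin n) K)
    (f : Fin q → K[X]) (m : Fin q → ℕ)
    (hfmonic : ∀ p, (f p).Monic) (hfirr : ∀ p, Irreducible (f p))
    (hfdist : Function.Injective f)
    (hfact : A.charpoly = ∏ p, (f p) ^ (m p))
    (p : Fin q) (g : K[X]) (hg : g * (f p) ^ (m p) = A.charpoly)
    (j : Fin n) (π : K[X])
    (hmin : ∀ h : K[X],
      (Polynomial.aeval A h).mulVec (Pi.single j 1) = 0 ↔ π ∣ h)
    (r : ℕ) (hr : (f p) ^ r ∣ π) (hr' : ¬ (f p) ^ (r + 1) ∣ π) :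
    ((Polynomial.aeval A (f p)) ^ (m p) * Polynomial.aeval A g).mulVec
        (Pi.single j 1) = 0 ∧
      IsLeast {k : ℕ |
        ((Polynomial.aeval A (f p)) ^ k * Polynomial.aeval A g).mulVec
          (Pi.single j 1) = 0} r := by
  have hfp : Prime (f p) := (hfirr p).prime
  have hannih (k : ℕ) : ((aeval A (f p)) ^ k * aeval A g).mulVec (Pi.single j 1) = 0 ↔
      π ∣ f p ^ k * g := by
    rw [← map_pow, ← map_mul]
    exact hmin _
  have hπ : π ∣ f p ^ m p * g := by
    rw [mul_comm, hg]
    exact (hmin _).1 (by rw [aeval_self_charpoly, zero_mulVec])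
  have hg_eq : g = ∏ i ∈ univ.erase p, f i ^ m i :=
    mul_right_cancel₀ (pow_ne_zero _ hfp.ne_zero)
      (by rw [hg, hfact, prod_erase_mul _ _ (mem_univ p)])
  have hfg : ¬f p ∣ g := hg_eq ▸
    not_dvd_prod_of_monic_irreducible hfmonic hfirr hfdist (notMem_erase p univ) m
  have hset : {k : ℕ | ((aeval A (f p)) ^ k * aeval A g).mulVec (Pi.single j 1) = 0} =
      Set.Ici r :=
    Set.ext fun k => (hannih k).trans
      (hfp.dvd_pow_mul_iff_le_of_pow_dvd_of_not_pow_succ_dvd hfg hπ hr hr' k)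
  exact ⟨(hannih (m p)).2 hπ, hset ▸ isLeast_Ici⟩

/-- Let `χ_A = f_1^{m_1} ⋯ f_q^{m_q}` be the irreducible factorization of the
characteristic polynomial, `g_p = χ_A / f_p^{m_p}`, and let `r` be the multiplicity of
`f_p` in the minimal annihilating polynomial of the unit vector `e_j`. Then
`f_p(A)^{m_p} g_p(A) e_j = 0` and `r` is the least `k` with `f_p(A)^k g_p(A) e_j = 0`. -/
theorem multiplicity_is_least_annihilating_power
    (K : Type*) [Field K] (n q : ℕ)
    (A : Matrix (Fin n) (Fin n) K)
    (f : Fin q → K[X]) (m : Fin q → ℕ)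
    (hfmonic : ∀ p, (f p).Monic) (hfirr : ∀ p, Irreducible (f p))
    (hfdist : Function.Injective f) (hm : ∀ p, 1 ≤ m p)
    (hfact : A.charpoly = ∏ p, (f p) ^ (m p))
    (p : Fin q) (g : K[X]) (hg : g * (f p) ^ (m p) = A.charpoly)
    (j : Fin n) (π : K[X]) (hmonic : π.Monic)
    (hmin : ∀ h : K[X],
      (Polynomial.aeval A h).mulVec (Pi.single j 1) = 0 ↔ π ∣ h)
    (r : ℕ) (hr : (f p) ^ r ∣ π) (hr' : ¬ (f p) ^ (r + 1) ∣ π) :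
    ((Polynomial.aeval A (f p)) ^ (m p) * Polynomial.aeval A g).mulVec
        (Pi.single j 1) = 0 ∧
      IsLeast {k : ℕ |
        ((Polynomial.aeval A (f p)) ^ k * Polynomial.aeval A g).mulVec
          (Pi.single j 1) = 0} r :=
  multiplicity_is_least_annihilating_power_general K n q A f m hfmonic hfirr hfdist hfact p g hg j π
    hmin r hr hr'
end

section
/- (Lemma on pseudo annihilating polynomials.) Let K be a field, A an n×n matrix over K with characteristic polynomial factorization χ_A = f_1^{m_1}···f_q^{m_q} into pairwise distinct monic irreducible factors, and g_p = χ_A / f_p^{m_p}. Let u ∈ K^n be a row vector, fix j ∈ {1,…,n}, and for each p ∈ {1,…,q} let ρ_p be a natural number such that either ρ_p = 0 or the j-th entry of the row vector u·g_p(A)·f_p(A)^{ρ_p − 1} is nonzero. Then the polynomial f_1^{ρ_1} f_2^{ρ_2} ··· f_q^{ρ_q} divides the minimal annihilating polynomial π_{A,e_j} of the unit vector e_j. -/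
open Polynomial Matrix

/-- Lemma on pseudo annihilating polynomials: if for each `p` either `ρ_p = 0` or the
`j`-th entry of the row vector `u·g_p(A)·f_p(A)^{ρ_p - 1}` is nonzero, then
`f_1^{ρ_1} ⋯ f_q^{ρ_q}` divides the minimal annihilating polynomial of `e_j`. -/
theorem pseudo_annihilating_polynomial_dvd
    (K : Type*) [Field K] (n q : ℕ)
    (A : Matrix (Fin n) (Fin n) K)
    (f : Fin q → K[X]) (m : Fin q → ℕ)
    (hfmonic : ∀ p, (f p).Monic) (hfirr : ∀ p, Irreducible (f p))
    (hfdist : Function.Injective f) (hm : ∀ p, 1 ≤ m p)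
    (hfact : A.charpoly = ∏ p, (f p) ^ (m p))
    (g : Fin q → K[X]) (hg : ∀ p, g p * (f p) ^ (m p) = A.charpoly)
    (u : Fin n → K) (j : Fin n)
    (ρ : Fin q → ℕ)
    (hρ : ∀ p, ρ p = 0 ∨
      Matrix.vecMul u
        (Polynomial.aeval A (g p) * (Polynomial.aeval A (f p)) ^ (ρ p - 1)) j ≠ 0)
    (π : K[X]) (hmonic : π.Monic)
    (hmin : ∀ h : K[X],
      (Polynomial.aeval A h).mulVec (Pi.single j 1) = 0 ↔ π ∣ h) :
    (∏ p, (f p) ^ (ρ p)) ∣ π := by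
  have hπ0 : π ≠ 0 := hmonic.ne_zero
  have hπchar : π ∣ A.charpoly := by
    rw [← hmin]
    rw [Matrix.aeval_self_charpoly]
    ext i
    simp
  have hcop : ∀ p r : Fin q, p ≠ r → IsCoprime (f p) (f r) := by
    intro p r hpr
    rw [(hfirr p).coprime_iff_not_dvd]
    intro hdvd
    exact hpr (hfdist (Polynomial.eq_of_monic_of_associated (hfmonic p) (hfmonic r)
      ((hfirr p).associated_of_dvd (hfirr r) hdvd)))
  have key : ∀ p, f p ^ ρ p ∣ π := by
    intro p
    rcases Nat.eq_zero_or_pos (ρ p) with h0 | hpos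
    · simp [h0]
    have hne := (hρ p).resolve_left (by omega)
    -- π does not divide g p * f p ^ (ρ p - 1)
    have hnd : ¬ π ∣ g p * f p ^ (ρ p - 1) := by
      intro hdvd
      apply hne
      have h0 : (Polynomial.aeval A (g p * f p ^ (ρ p - 1))).mulVec (Pi.single j 1) = 0 :=
        (hmin _).mpr hdvd
      rw [_root_.map_mul, map_pow] at h0
      set M := Polynomial.aeval A (g p) * (Polynomial.aeval A (f p)) ^ (ρ p - 1) with hM
      have hcol : ∀ i, M i j = 0 := by
        intro i
        have := congrFun h0 i
        simpa [Matrix.mulVec, dotProduct, Pi.single_apply] using this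
      simp [Matrix.vecMul, dotProduct, hcol]
    by_contra hcon
    have hprime : Prime (f p) := (hfirr p).prime
    have hfin : FiniteMultiplicity (f p) π :=
      FiniteMultiplicity.of_prime_left hprime hπ0
    obtain ⟨t, hπeq, hndvd⟩ := hfin.exists_eq_pow_mul_and_not_dvd
    set s := multiplicity (f p) π with hs
    have hslt : s < ρ p := by
      by_contra hle
      exact hcon (dvd_trans (pow_dvd_pow _ (by omega)) ⟨t, hπeq⟩)
    have htg : t ∣ g p := by
      have ht : t ∣ g p * f p ^ m p := by
        rw [hg p]
        exact dvd_trans ⟨f p ^ s, by rw [hπeq]; ring⟩ hπchar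
      exact ((IsCoprime.pow_left (m := m p) (hprime.coprime_iff_not_dvd.mpr hndvd)).symm).dvd_of_dvd_mul_right ht
    apply hnd
    calc π = f p ^ s * t := hπeq
    _ ∣ f p ^ (ρ p - 1) * g p := mul_dvd_mul (pow_dvd_pow _ (by omega)) htg
    _ = g p * f p ^ (ρ p - 1) := mul_comm _ _
  exact Finset.prod_dvd_of_coprime
    (fun p _ r _ hpr => ((hcop p r hpr).pow))
    (fun p _ => key p)
end

section
/- Let K be a field, A an n×n matrix over K with characteristic polynomial factorization χ_A = f_1^{m_1}···f_q^{m_q} into pairwise distinct monic irreducible factors, and let π_{A,e_j} = f_1^{r_1}···f_q^{r_q} be the factorization of the minimal annihilating polynomial of the unit vector e_j. Suppose ρ_1,…,ρ_q are natural numbers with ρ_p ≤ r_p for all p and ρ_i < r_i for at least one i, and let q'' = max{i : ρ_i < r_i}. Then for every natural number l: f_1(A)^{m_1} ··· f_{q''−1}(A)^{m_{q''−1}} · f_{q''}(A)^{ρ_{q''} + l} · f_{q''+1}(A)^{ρ_{q''+1}} ··· f_q(A)^{ρ_q} · e_j = 0 if and only if l ≥ r_{q''} − ρ_{q''}. -/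
/-!
The annihilator `π` of `e_j` divides `χ_A` (Cayley–Hamilton), so `r_p ≤ m_p` for every `p`.
Since the `f_p` are pairwise non-associated primes, `π = ∏ f_p ^ r_p` divides `∏ f_p ^ e_p` iff
`r_p ≤ e_p` for every `p`. For the product in question this holds automatically at `p < q''`
(where `e_p = m_p ≥ r_p`) and at `p > q''` (where `e_p = ρ_p = r_p`), so only the condition
`r_{q''} ≤ ρ_{q''} + l` at `p = q''` remains.
-/

open Polynomial Matrix

section PrimePowers

variable {ι R : Type*} [Fintype ι] [DecidableEq ι] [CommMonoidWithZero R] [IsCancelMulZero R]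
  {f : ι → R}

theorem pow_dvd_prod_pow_iff (hf : ∀ p, Prime (f p))
    (hna : Pairwise fun a b => ¬ Associated (f a) (f b)) (b : ι → ℕ) (p : ι) (k : ℕ) :
    f p ^ k ∣ ∏ t, f t ^ b t ↔ k ≤ b p := by
  refine ⟨fun h => ?_,
    fun h => (pow_dvd_pow _ h).trans (Finset.dvd_prod_of_mem _ (Finset.mem_univ p))⟩
  rw [← Finset.mul_prod_erase _ _ (Finset.mem_univ p)] at h
  have hndvd : ¬ f p ∣ ∏ t ∈ Finset.univ.erase p, f t ^ b t := by
    intro hdvd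
    obtain ⟨t, ht, hdt⟩ := (hf p).exists_mem_finset_dvd hdvd
    exact hna (Finset.ne_of_mem_erase ht).symm
      (((hf p).dvd_prime_iff_associated (hf t)).mp ((hf p).dvd_of_dvd_pow hdt))
  exact (pow_dvd_pow_iff (hf p).ne_zero (hf p).not_isUnit).mp
    ((hf p).pow_dvd_of_dvd_mul_right _ hndvd h)

theorem prod_pow_dvd_prod_pow_iff (hf : ∀ p, Prime (f p))
    (hna : Pairwise fun a b => ¬ Associated (f a) (f b)) (a b : ι → ℕ) :
    ∏ p, f p ^ a p ∣ ∏ p, f p ^ b p ↔ ∀ p, a p ≤ b p := by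
  refine ⟨fun h p => ?_, fun h => Finset.prod_dvd_prod_of_dvd _ _ fun p _ => pow_dvd_pow _ (h p)⟩
  exact (pow_dvd_prod_pow_iff hf hna b p (a p)).mp
    ((Finset.dvd_prod_of_mem _ (Finset.mem_univ p)).trans h)

end PrimePowers

theorem Polynomial.pairwise_not_associated_of_monic {K ι : Type*} [Field K] {f : ι → K[X]}
    (hmonic : ∀ p, (f p).Monic) (hinj : Function.Injective f) :
    Pairwise fun a b => ¬ Associated (f a) (f b) :=
  fun a b hab hassoc => hab (hinj (eq_of_monic_of_associated (hmonic a) (hmonic b) hassoc))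

theorem Finset.prod_filter_lt_mul_mul_prod_filter_gt {ι M : Type*} [Fintype ι] [LinearOrder ι]
    [CommMonoid M] (g : ι → M) (i : ι) :
    (∏ p ∈ univ.filter (· < i), g p) * g i * ∏ p ∈ univ.filter (i < ·), g p = ∏ p, g p := by
  have hnot_lt : univ.filter (fun p => ¬ p < i) = insert i (univ.filter (i < ·)) := by
    ext p
    simp [le_iff_eq_or_lt, eq_comm]
  rw [← prod_filter_mul_prod_filter_not univ (· < i), hnot_lt, prod_insert (by simp), mul_assoc]

theorem Finset.prod_filter_lt_pow_mul_pow_mul_prod_filter_gt_pow {ι M : Type*} [Fintype ι]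
    [LinearOrder ι] [CommMonoid M] (g : ι → M) (a b : ι → ℕ) (i : ι) (k : ℕ) :
    (∏ p ∈ univ.filter (· < i), g p ^ a p) * g i ^ k * ∏ p ∈ univ.filter (i < ·), g p ^ b p =
      ∏ p, g p ^ (if p < i then a p else if p = i then k else b p) := by
  rw [← prod_filter_lt_mul_mul_prod_filter_gt _ i]
  congr 1
  · congr 1
    · exact prod_congr rfl fun p hp => by simp_all
    · simp
  · exact prod_congr rfl fun p hp => by
      simp only [mem_filter] at hp
      simp [hp.2.not_gt, hp.2.ne']

theorem revision_annihilation_iff_general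
    (K : Type*) [Field K] (n q : ℕ)
    (A : Matrix (Fin n) (Fin n) K)
    (f : Fin q → K[X]) (m : Fin q → ℕ)
    (hfmonic : ∀ p, (f p).Monic) (hfirr : ∀ p, Irreducible (f p))
    (hfdist : Function.Injective f)
    (hfact : A.charpoly = ∏ p, (f p) ^ (m p))
    (j : Fin n) (π : K[X])
    (hmin : ∀ h : K[X],
      (Polynomial.aeval A h).mulVec (Pi.single j 1) = 0 ↔ π ∣ h)
    (r : Fin q → ℕ) (hπ : π = ∏ p, (f p) ^ (r p))
    (ρ : Fin q → ℕ)
    (i : Fin q) (himax : ∀ p, i < p → ρ p = r p) :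
    ∀ l : ℕ,
      (Polynomial.aeval A
        ((∏ p ∈ Finset.univ.filter (fun p => p < i), (f p) ^ (m p)) *
          (f i) ^ (ρ i + l) *
          ∏ p ∈ Finset.univ.filter (fun p => i < p), (f p) ^ (ρ p))).mulVec
            (Pi.single j 1) = 0 ↔ r i - ρ i ≤ l := by
  intro l
  have hprime : ∀ p, Prime (f p) := fun p => (hfirr p).prime
  have hna := pairwise_not_associated_of_monic hfmonic hfdist
  have hr_le_m : ∀ p, r p ≤ m p := by
    have hπχ : π ∣ A.charpoly := by
      rw [← hmin, aeval_self_charpoly, zero_mulVec]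
    rwa [hπ, hfact, prod_pow_dvd_prod_pow_iff hprime hna] at hπχ
  rw [Finset.prod_filter_lt_pow_mul_pow_mul_prod_filter_gt_pow, hmin, hπ,
    prod_pow_dvd_prod_pow_iff hprime hna]
  constructor
  · intro h
    simpa [add_comm] using h i
  · intro hl p
    split_ifs with hlt heq
    · exact hr_le_m p
    · subst heq
      omega
    · exact (himax p (lt_of_le_of_ne (not_lt.mp hlt) (Ne.symm heq))).ge

/-- Let `π_{A,e_j} = f_1^{r_1} ⋯ f_q^{r_q}` and `ρ_p ≤ r_p` with `ρ_i < r_i` for at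
least one `i`; let `i = q''` be the largest such index (so `ρ_p = r_p` for `p > i`).
Then `f_1(A)^{m_1} ⋯ f_{i-1}(A)^{m_{i-1}} f_i(A)^{ρ_i + l} f_{i+1}(A)^{ρ_{i+1}} ⋯
f_q(A)^{ρ_q} e_j = 0` if and only if `l ≥ r_i - ρ_i`. -/
theorem revision_annihilation_iff
    (K : Type*) [Field K] (n q : ℕ)
    (A : Matrix (Fin n) (Fin n) K)
    (f : Fin q → K[X]) (m : Fin q → ℕ)
    (hfmonic : ∀ p, (f p).Monic) (hfirr : ∀ p, Irreducible (f p))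
    (hfdist : Function.Injective f) (hm : ∀ p, 1 ≤ m p)
    (hfact : A.charpoly = ∏ p, (f p) ^ (m p))
    (j : Fin n) (π : K[X]) (hmonic : π.Monic)
    (hmin : ∀ h : K[X],
      (Polynomial.aeval A h).mulVec (Pi.single j 1) = 0 ↔ π ∣ h)
    (r : Fin q → ℕ) (hπ : π = ∏ p, (f p) ^ (r p))
    (ρ : Fin q → ℕ) (hρle : ∀ p, ρ p ≤ r p)
    (i : Fin q) (hi : ρ i < r i) (himax : ∀ p, i < p → ρ p = r p) :
    ∀ l : ℕ,
      (Polynomial.aeval A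
        ((∏ p ∈ Finset.univ.filter (fun p => p < i), (f p) ^ (m p)) *
          (f i) ^ (ρ i + l) *
          ∏ p ∈ Finset.univ.filter (fun p => i < p), (f p) ^ (ρ p))).mulVec
            (Pi.single j 1) = 0 ↔ r i - ρ i ≤ l :=
  revision_annihilation_iff_general K n q A f m hfmonic hfirr hfdist hfact j π hmin r hπ ρ i himax
end

section
/- (Existence of a good projection vector.) Let K be an infinite field (e.g. of characteristic zero), A an n×n matrix over K with characteristic polynomial factorization χ_A = f_1^{m_1}···f_q^{m_q} into pairwise distinct monic irreducible factors, g_p = χ_A / f_p^{m_p}, and for each j ∈ {1,…,n}, p ∈ {1,…,q}, let r_{j,p} be the multiplicity of f_p in π_{A,e_j}. Then there exists a row vector u ∈ K^n such that for every j and every p with r_{j,p} ≥ 1, the j-th entry of the row vector u·g_p(A)·f_p(A)^{r_{j,p}−1} is nonzero; consequently, for this u and for all j and p, the least natural number k such that the j-th entry of u·g_p(A)·f_p(A)^k is zero equals r_{j,p}, so the pseudo annihilating polynomial f_1^{ρ_{1,j}}···f_q^{ρ_{q,j}} determined by u equals π_{A,e_j} for every j. -/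
open Polynomial Matrix Function

/-! The factors `f_p` are pairwise coprime, so `π_{A,e_j} = ∏ f_p ^ r_{j,p}`, and
`π_{A,e_j} ∣ g_p f_p ^ k` exactly when `r_{j,p} ≤ k`. Hence the columns `g_p(A) f_p(A)^k e_j`
with `k < r_{j,p}` are finitely many nonzero vectors, and over an infinite field a single row
vector `u` lies outside all the hyperplanes `u ⬝ᵥ v = 0` they define. -/

theorem Matrix.exists_vecMul_apply_ne_zero {K m n ι : Type*} [Field K] [Infinite K]
    [Fintype m] [DecidableEq m] [Finite ι] (M : ι → Matrix m n K) (j : ι → n)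
    (hM : ∀ i, (M i).col (j i) ≠ 0) : ∃ u : m → K, ∀ i, (u ᵥ* M i) (j i) ≠ 0 := by
  refine Module.Dual.exists_forall_ne_zero_of_forall_exists
    (fun i => (LinearMap.proj (j i)).comp (M i).vecMulLinear) fun i => ?_
  obtain ⟨k, hk⟩ := ne_iff.mp (hM i)
  exact ⟨Pi.single k 1, by simpa [single_one_vecMul] using hk⟩

theorem Polynomial.pairwise_isCoprime_of_injective {K ι : Type*} [Field K] {f : ι → K[X]}
    (hmonic : ∀ i, (f i).Monic) (hirr : ∀ i, Irreducible (f i)) (hinj : Injective f) :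
    Pairwise (IsCoprime on f) := fun i t hit =>
  (hirr i).coprime_iff_not_dvd.mpr fun hdvd => hit <| hinj <|
    eq_of_monic_of_associated (hmonic i) (hmonic t) ((hirr i).associated_of_dvd (hirr t) hdvd)

theorem Polynomial.eq_prod_pow_of_dvd_prod_pow {K ι : Type*} [Field K] [Fintype ι]
    {f : ι → K[X]} (hmonic : ∀ i, (f i).Monic) (hirr : ∀ i, Irreducible (f i))
    (hcop : Pairwise (IsCoprime on f)) {π : K[X]} (hπ : π.Monic) {m r : ι → ℕ}
    (hdvd : π ∣ ∏ i, f i ^ m i) (hr : ∀ i, f i ^ r i ∣ π ∧ ¬ f i ^ (r i + 1) ∣ π) :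
    π = ∏ i, f i ^ r i := by
  obtain ⟨h, rfl⟩ :=
    Fintype.prod_dvd_of_coprime (hcop.mono fun _ _ hit => hit.pow) fun i => (hr i).1
  have hunit : IsUnit h := by
    by_contra hu
    obtain ⟨w, hw, hwh⟩ :=
      WfDvdMonoid.exists_irreducible_factor hu (right_ne_zero_of_mul hπ.ne_zero)
    obtain ⟨i, -, hwi⟩ :=
      hw.prime.exists_mem_finset_dvd ((hwh.trans (dvd_mul_left h _)).trans hdvd)
    have hfi : f i ∣ h :=
      (hw.associated_of_dvd (hirr i) (hw.prime.dvd_of_dvd_pow hwi)).symm.dvd.trans hwh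
    exact (hr i).2 (pow_succ (f i) (r i) ▸
      mul_dvd_mul (Finset.dvd_prod_of_mem (fun t => f t ^ r t) (Finset.mem_univ i)) hfi)
  have hprod : (∏ i, f i ^ r i).Monic := monic_prod_of_monic _ _ fun i _ => (hmonic i).pow _
  rw [((hprod.of_mul_monic_left hπ).isUnit_iff).mp hunit, mul_one]

section CommRing

variable {R ι : Type*} [CommRing R] [Fintype ι] [DecidableEq ι] {f : ι → R}

theorem isCoprime_of_mul_pow_eq_prod_pow [IsDomain R] (hcop : Pairwise (IsCoprime on f))
    {m : ι → ℕ} {g : R} {i : ι} (hi : f i ≠ 0) (hg : g * f i ^ m i = ∏ t, f t ^ m t) :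
    IsCoprime (f i) g := by
  rw [← Finset.prod_erase_mul _ _ (Finset.mem_univ i)] at hg
  rw [mul_right_cancel₀ (pow_ne_zero _ hi) hg]
  exact IsCoprime.prod_right fun t ht => (hcop (Finset.ne_of_mem_erase ht).symm).pow_right

theorem prod_pow_dvd_mul_pow_iff [IsDomain R] (hirr : ∀ i, Irreducible (f i))
    (hcop : Pairwise (IsCoprime on f)) {r : ι → ℕ} {g : R} {i : ι} {m : ℕ}
    (hgi : IsCoprime (f i) g) (hdvd : ∏ t, f t ^ r t ∣ g * f i ^ m) (k : ℕ) :
    ∏ t, f t ^ r t ∣ g * f i ^ k ↔ r i ≤ k := by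
  rw [← Finset.mul_prod_erase _ _ (Finset.mem_univ i)] at hdvd ⊢
  constructor
  · intro hk
    exact (pow_dvd_pow_iff (hirr i).ne_zero (hirr i).not_isUnit).mp
      (hgi.pow_left.dvd_of_dvd_mul_left ((dvd_mul_right _ _).trans hk))
  · intro hk
    have hrest : IsCoprime (∏ t ∈ Finset.univ.erase i, f t ^ r t) (f i ^ m) :=
      IsCoprime.prod_left fun t ht => (hcop (Finset.ne_of_mem_erase ht)).pow
    rw [mul_comm g]
    exact mul_dvd_mul (pow_dvd_pow _ hk)
      (hrest.dvd_of_dvd_mul_right ((dvd_mul_left _ _).trans hdvd))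

end CommRing

theorem exists_good_projection_vector_general
    (K : Type*) [Field K] [Infinite K] (n q : ℕ)
    (A : Matrix (Fin n) (Fin n) K)
    (f : Fin q → K[X]) (m : Fin q → ℕ)
    (hfmonic : ∀ p, (f p).Monic) (hfirr : ∀ p, Irreducible (f p))
    (hfdist : Function.Injective f)
    (hfact : A.charpoly = ∏ p, (f p) ^ (m p))
    (g : Fin q → K[X]) (hg : ∀ p, g p * (f p) ^ (m p) = A.charpoly)
    (π : Fin n → K[X]) (hπmonic : ∀ j, (π j).Monic)
    (hπmin : ∀ j, ∀ p : K[X],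
      (Polynomial.aeval A p).mulVec (Pi.single j 1) = 0 ↔ π j ∣ p)
    (r : Fin n → Fin q → ℕ)
    (hr : ∀ j p, (f p) ^ (r j p) ∣ π j ∧ ¬ (f p) ^ (r j p + 1) ∣ π j) :
    ∃ u : Fin n → K,
      (∀ j p, 1 ≤ r j p →
        Matrix.vecMul u
          (Polynomial.aeval A (g p) *
            (Polynomial.aeval A (f p)) ^ (r j p - 1)) j ≠ 0) ∧
      (∀ j p, IsLeast {k : ℕ |
        Matrix.vecMul u
          (Polynomial.aeval A (g p) *
            (Polynomial.aeval A (f p)) ^ k) j = 0} (r j p)) ∧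
      (∀ j, π j = ∏ p, (f p) ^ (r j p)) := by
  have hcop := pairwise_isCoprime_of_injective hfmonic hfirr hfdist
  have hπχ : ∀ j, π j ∣ A.charpoly := fun j =>
    (hπmin j _).mp (by rw [aeval_self_charpoly, zero_mulVec])
  have hπ : ∀ j, π j = ∏ p, f p ^ r j p := fun j =>
    eq_prod_pow_of_dvd_prod_pow hfmonic hfirr hcop (hπmonic j) (hfact ▸ hπχ j) (hr j)
  have hcol : ∀ j p k, (aeval A (g p * f p ^ k)).col j = 0 ↔ r j p ≤ k := fun j p k => by
    rw [← mulVec_single_one, hπmin, hπ j]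
    refine prod_pow_dvd_mul_pow_iff (m := m p) hfirr hcop
      (isCoprime_of_mul_pow_eq_prod_pow hcop (hfirr p).ne_zero (hfact ▸ hg p)) ?_ k
    simpa only [← hπ j, hg p] using hπχ j
  obtain ⟨u, hu⟩ := exists_vecMul_apply_ne_zero
    (fun x : Σ jp : Fin n × Fin q, Fin (r jp.1 jp.2) => aeval A (g x.1.2 * f x.1.2 ^ (x.2 : ℕ)))
    (fun x => x.1.1) fun x => by rw [Ne, hcol, not_le]; exact x.2.isLt
  have hentry : ∀ j p k, (u ᵥ* (aeval A (g p) * aeval A (f p) ^ k)) j = 0 ↔ r j p ≤ k := by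
    intro j p k
    rw [← map_pow, ← map_mul]
    refine ⟨fun h0 => ?_, fun hk => by rw [vecMul_apply, (hcol j p k).mpr hk, dotProduct_zero]⟩
    by_contra! hk
    exact hu ⟨(j, p), ⟨k, hk⟩⟩ h0
  refine ⟨u, fun j p hr1 => ?_,
    fun j p => ⟨(hentry j p _).mpr le_rfl, fun k => (hentry j p k).mp⟩, hπ⟩
  rw [Ne, hentry]
  omega

/-- Existence of a good projection vector over an infinite field: there is a row vector
`u` such that for all `j, p` with `r_{j,p} ≥ 1` the `j`-th entry of
`u·g_p(A)·f_p(A)^{r_{j,p}-1}` is nonzero; consequently `r_{j,p}` is the least `k` with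
the `j`-th entry of `u·g_p(A)·f_p(A)^k` zero, and the pseudo annihilating polynomial
`∏_p f_p^{r_{j,p}}` determined by `u` equals `π_{A,e_j}` for every `j`. -/
theorem exists_good_projection_vector
    (K : Type*) [Field K] [Infinite K] (n q : ℕ)
    (A : Matrix (Fin n) (Fin n) K)
    (f : Fin q → K[X]) (m : Fin q → ℕ)
    (hfmonic : ∀ p, (f p).Monic) (hfirr : ∀ p, Irreducible (f p))
    (hfdist : Function.Injective f) (hm : ∀ p, 1 ≤ m p)
    (hfact : A.charpoly = ∏ p, (f p) ^ (m p))
    (g : Fin q → K[X]) (hg : ∀ p, g p * (f p) ^ (m p) = A.charpoly)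
    (π : Fin n → K[X]) (hπmonic : ∀ j, (π j).Monic)
    (hπmin : ∀ j, ∀ p : K[X],
      (Polynomial.aeval A p).mulVec (Pi.single j 1) = 0 ↔ π j ∣ p)
    (r : Fin n → Fin q → ℕ)
    (hr : ∀ j p, (f p) ^ (r j p) ∣ π j ∧ ¬ (f p) ^ (r j p + 1) ∣ π j) :
    ∃ u : Fin n → K,
      (∀ j p, 1 ≤ r j p →
        Matrix.vecMul u
          (Polynomial.aeval A (g p) *
            (Polynomial.aeval A (f p)) ^ (r j p - 1)) j ≠ 0) ∧
      (∀ j p, IsLeast {k : ℕ |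
        Matrix.vecMul u
          (Polynomial.aeval A (g p) *
            (Polynomial.aeval A (f p)) ^ k) j = 0} (r j p)) ∧
      (∀ j, π j = ∏ p, (f p) ^ (r j p)) :=
  exists_good_projection_vector_general K n q A f m hfmonic hfirr hfdist hfact g hg π hπmonic hπmin
    r hr
end
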